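/- The geometric measure of entanglement of the Dicke state |S_{n,k}⟩ equals log₂( (n/k)^k (n/(n−k))^{n−k} / C(n,k) ), assuming 0 < k < n and that the maximal overlap of |S_{n,k}⟩ with product states is attained at a symmetric product state. -/

import Mathlib

open Finset

noncomputable def overlap {n : ℕ} (f g : (Fin n → Fin 2) → ℂ) : ℂ :=
  ∑ x : Fin n → Fin 2, (starRingEnd ℂ) (f x) * g x

noncomputable def symmPow (n : ℕ) (σ : Fin 2 → ℂ) : (Fin n → Fin 2) → ℂ :=
  fun x => ∏ i, σ (x i)

noncomputable def prodState {n : ℕ} (σ : Fin n → Fin 2 → ℂ) : (Fin n → Fin 2) → ℂ :=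
  fun x => ∏ j, σ j (x j)

def qubitUnit (σ : Fin 2 → ℂ) : Prop :=
  ‖σ 0‖ ^ 2 + ‖σ 1‖ ^ 2 = 1

noncomputable def dicke (n k : ℕ) : (Fin n → Fin 2) → ℂ :=
  fun x => if (∑ i, ((x i : ℕ))) = k then ((1 / Real.sqrt (n.choose k) : ℝ) : ℂ) else 0

noncomputable def bloch (θ ph : ℝ) : Fin 2 → ℂ :=
  fun i => if i = 0 then ((Real.cos (θ/2) : ℝ) : ℂ)
           else Complex.exp (Complex.I * ph) * ((Real.sin (θ/2) : ℝ) : ℂ)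

def isCPP (n : ℕ) (ψ : (Fin n → Fin 2) → ℂ) (σ : Fin 2 → ℂ) : Prop :=
  qubitUnit σ ∧ ∀ τ, qubitUnit τ →
    ‖overlap (symmPow n τ) ψ‖ ≤ ‖overlap (symmPow n σ) ψ‖

/-!
For a symmetric product state `σ^{⊗n}` only the basis vectors of Hamming weight `k` meet
`|S_{n,k}⟩`, all with amplitude `conj (σ 0) ^ (n - k) * conj (σ 1) ^ k`, so the squared overlap is
`C(n,k) (1 - t)^(n-k) t^k` with `t = ‖σ 1‖²`. Weighted AM-GM shows this is maximal at `t = k / n`,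
and the hypothesis transfers the maximum to arbitrary product states.
-/

section HammingWeight

variable {ι : Type*} [Fintype ι]

lemma sum_val_eq_card_filter_eq_one (x : ι → Fin 2) :
    ∑ i, (x i : ℕ) = #{i | x i = 1} := by
  have hval : ∀ b : Fin 2, (b : ℕ) = if b = 1 then 1 else 0 := by decide
  rw [card_filter]
  exact sum_congr rfl fun i _ => hval (x i)

lemma prod_comp_fin_two {M : Type*} [CommMonoid M] (f : Fin 2 → M) (x : ι → Fin 2) :
    ∏ i, f (x i) = f 0 ^ (Fintype.card ι - #{i | x i = 1}) * f 1 ^ #{i | x i = 1} := by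
  have hcard : #{i | x i = 0} = Fintype.card ι - #{i | x i = 1} := by
    have hne : ∀ b : Fin 2, b ≠ 1 ↔ b = 0 := by decide
    rw [← card_univ, ← card_filter_add_card_filter_not (s := univ) (fun i => x i = 1)]
    simp only [hne, Nat.add_sub_cancel_left]
  rw [← prod_fiberwise univ x, Fin.prod_univ_two, ← hcard]
  congr 1 <;> exact (prod_congr rfl fun i hi => by rw [(mem_filter.mp hi).2]).trans (prod_const _)

lemma card_filter_card_eq_choose [DecidableEq ι] (k : ℕ) :
    #{x : ι → Fin 2 | #{i | x i = 1} = k} = (Fintype.card ι).choose k := by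
  rw [← card_univ, ← card_powersetCard]
  refine card_nbij' (fun x => ({i | x i = 1} : Finset ι)) (fun s i => if i ∈ s then 1 else 0)
    ?_ ?_ ?_ ?_
  · intro x hx
    simpa [mem_powersetCard] using hx
  · intro s hs
    simp_all [mem_powersetCard]
  · intro x _
    have hb : ∀ b : Fin 2, (if b = 1 then 1 else 0) = b := by decide
    funext i
    simp only [mem_filter, mem_univ, true_and, hb]
  · intro s _
    ext i
    simp

end HammingWeight

open ComplexConjugate in
lemma overlap_symmPow_dicke (n k : ℕ) (σ : Fin 2 → ℂ) :
    overlap (symmPow n σ) (dicke n k)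
      = (√(n.choose k : ℝ) : ℂ) * conj (σ 0) ^ (n - k) * conj (σ 1) ^ k := by
  set c : ℂ := ((1 / √(n.choose k : ℝ) : ℝ) : ℂ)
  have hterm : ∀ x ∈ ({x | #{i | x i = 1} = k} : Finset (Fin n → Fin 2)),
      conj (∏ i, σ (x i)) * c = conj (σ 0) ^ (n - k) * conj (σ 1) ^ k * c := by
    intro x hx
    rw [map_prod, prod_comp_fin_two (fun b => conj (σ b)), (mem_filter.mp hx).2,
      Fintype.card_fin]
  have hc : (n.choose k : ℂ) * c = (√(n.choose k : ℝ) : ℂ) := by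
    rw [← Complex.ofReal_natCast, ← Complex.ofReal_mul, mul_one_div, Real.div_sqrt]
  unfold overlap symmPow dicke
  simp_rw [sum_val_eq_card_filter_eq_one, mul_ite, mul_zero]
  rw [← sum_filter, sum_congr rfl hterm, sum_const, card_filter_card_eq_choose,
    Fintype.card_fin, nsmul_eq_mul, ← hc]
  ring

lemma norm_overlap_symmPow_dicke_sq (n k : ℕ) (σ : Fin 2 → ℂ) :
    ‖overlap (symmPow n σ) (dicke n k)‖ ^ 2
      = n.choose k * (‖σ 0‖ ^ 2) ^ (n - k) * (‖σ 1‖ ^ 2) ^ k := by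
  rw [overlap_symmPow_dicke]
  simp only [norm_mul, norm_pow, Complex.norm_conj, Complex.norm_real, Real.norm_eq_abs,
    abs_of_nonneg (Real.sqrt_nonneg _), mul_pow, Real.sq_sqrt (Nat.cast_nonneg _)]
  ring

lemma pow_mul_pow_le_of_add_eq_one {p q : ℝ} (hp : 0 ≤ p) (hq : 0 ≤ q) (hpq : p + q = 1)
    {a b : ℕ} (ha : 0 < a) (hb : 0 < b) :
    p ^ a * q ^ b ≤ (a / (a + b)) ^ a * (b / (a + b)) ^ b := by
  set N : ℝ := a + b
  have hN : 0 < N := by positivity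
  have hwa : (0 : ℝ) < a / N := by positivity
  have hwb : (0 : ℝ) < b / N := by positivity
  have hw : (a / N : ℝ) + b / N = 1 := by rw [← add_div, div_self hN.ne']
  have hamgm := Real.geom_mean_le_arith_mean2_weighted (p₁ := p / (a / N)) (p₂ := q / (b / N))
    hwa.le hwb.le (by positivity) (by positivity) hw
  rw [mul_div_cancel₀ _ hwa.ne', mul_div_cancel₀ _ hwb.ne', hpq] at hamgm
  have hpow : ∀ {x w : ℝ} {m : ℕ}, 0 ≤ x → w * N = m → (x ^ w) ^ (a + b) = x ^ m := by
    intro x w m hx hwm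
    rw [← Real.rpow_natCast, ← Real.rpow_mul hx, Nat.cast_add, hwm, Real.rpow_natCast]
  have hle := pow_le_one₀ (n := a + b) (by positivity) hamgm
  rw [mul_pow, hpow (by positivity) (div_mul_cancel₀ _ hN.ne'),
    hpow (by positivity) (div_mul_cancel₀ _ hN.ne'), div_pow p, div_pow q, div_mul_div_comm,
    div_le_one (by positivity)] at hle
  exact hle

lemma isGreatest_norm_overlap_symmPow_dicke_sq {n k : ℕ} (hk : 0 < k) (hkn : k < n) :
    IsGreatest {a : ℝ | ∃ σ : Fin 2 → ℂ, qubitUnit σ ∧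
        a = ‖overlap (symmPow n σ) (dicke n k)‖ ^ 2}
      (n.choose k * (((n - k : ℕ) : ℝ) / n) ^ (n - k) * ((k : ℝ) / n) ^ k) := by
  have hn : ((n - k : ℕ) : ℝ) + k = n := by rw [← Nat.cast_add, Nat.sub_add_cancel hkn.le]
  have hnorm_sq : ∀ {x : ℝ}, 0 ≤ x → ‖(√x : ℂ)‖ ^ 2 = x := fun hx => by
    rw [Complex.norm_real, Real.norm_of_nonneg (Real.sqrt_nonneg _), Real.sq_sqrt hx]
  constructor
  · refine ⟨![√(((n - k : ℕ) : ℝ) / n), √((k : ℝ) / n)], ?_, ?_⟩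
    · simp only [qubitUnit, Matrix.cons_val_zero, Matrix.cons_val_one, Matrix.cons_val_fin_one]
      rw [hnorm_sq (by positivity), hnorm_sq (by positivity), ← add_div, hn,
        div_self (Nat.cast_ne_zero.mpr (by omega))]
    · simp only [norm_overlap_symmPow_dicke_sq, Matrix.cons_val_zero, Matrix.cons_val_one,
        Matrix.cons_val_fin_one]
      rw [hnorm_sq (by positivity), hnorm_sq (by positivity)]
  · rintro _ ⟨σ, hσ, rfl⟩
    rw [norm_overlap_symmPow_dicke_sq, mul_assoc, mul_assoc, ← hn]
    exact mul_le_mul_of_nonneg_left (pow_mul_pow_le_of_add_eq_one (by positivity)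
      (by positivity) hσ (Nat.sub_pos_of_lt hkn) hk) (Nat.cast_nonneg _)

theorem dicke_geometric_measure
    (n k : ℕ) (hk : 0 < k) (hkn : k < n)
    (hsym : sSup {a : ℝ | ∃ σ : Fin n → Fin 2 → ℂ, (∀ j, qubitUnit (σ j)) ∧
              a = ‖overlap (prodState σ) (dicke n k)‖ ^ 2}
          = sSup {a : ℝ | ∃ σ : Fin 2 → ℂ, qubitUnit σ ∧
              a = ‖overlap (symmPow n σ) (dicke n k)‖ ^ 2}) :
    - Real.logb 2 (sSup {a : ℝ | ∃ σ : Fin n → Fin 2 → ℂ, (∀ j, qubitUnit (σ j)) ∧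
        a = ‖overlap (prodState σ) (dicke n k)‖ ^ 2})
      = Real.logb 2 ((((n : ℝ) / k) ^ k * ((n : ℝ) / ((n - k : ℕ) : ℝ)) ^ (n - k))
          / (n.choose k : ℝ)) := by
  rw [hsym, (isGreatest_norm_overlap_symmPow_dicke_sq hk hkn).csSup_eq, ← Real.logb_inv]
  congr 1
  rw [mul_inv, mul_inv, ← inv_pow, ← inv_pow, inv_div, inv_div]
  ring
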